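/- arXiv:2601.04324 — 4 statements merged into one kernel-verified Lean document; each statement's English description precedes it below -/
import Mathlib

section
/- Let n ∈ ℕ, p ∈ (1,∞), and let μ ∈ A_p on ℝⁿ. For k ∈ (0,∞), define the lower truncation T_k∘μ (x) = max(k, μ(x)). Then for every R₀ > 0, one has [[T_k∘μ]]_{BMO(B_{R₀}, T_k∘μ)} ≤ 2 [[μ]]_{BMO(B_{R₀}, μ)}. -/
open MeasureTheory Metric Set
open scoped ENNReal Topology

noncomputable section

abbrev En (n : ℕ) : Type := EuclideanSpace ℝ (Fin n)

/-- Lebesgue average of `f` over the ball `B_r(y)`. -/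
def ballAvg (n : ℕ) (f : En n → ℝ) (y : En n) (r : ℝ) : ℝ :=
  ⨍ x in ball y r, f x

/-- Muckenhoupt `A_p` characteristic. -/
def apNorm (n : ℕ) (p : ℝ) (μ : En n → ℝ) : ℝ≥0∞ :=
  ⨆ (y : En n) (r : ℝ) (_ : 0 < r),
    ENNReal.ofReal
      ((ballAvg n μ y r) *
        (ballAvg n (fun x => μ x ^ (-(1 : ℝ) / (p - 1))) y r) ^ (p - 1))

/-- Weighted mean oscillation `[[f]]_{BMO(Ω, μ)}`. -/
def wBMO (n : ℕ) (Ω : Set (En n)) (μ f : En n → ℝ) : ℝ≥0∞ :=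
  ⨆ (y : En n) (r : ℝ) (_ : 0 < r) (_ : ball y r ⊆ Ω),
    ENNReal.ofReal
      ((∫ x in ball y r, |f x - ballAvg n f y r|) / (∫ x in ball y r, μ x))

/-- `(ω^{-n})_{B_r(y)}`, the average of `ω^{-n}` over `B_r(y)`. -/
def invAvg (n : ℕ) (ω : En n → ℝ) (y : En n) (r : ℝ) : ℝ :=
  ballAvg n (fun x => ω x ^ (-(n : ℝ))) y r

/-- The height `r² (ω^{-n})_{B_r(y)}^{1/n}` of the weighted parabolic cylinders. -/
def cylHeight (n : ℕ) (ω : En n → ℝ) (y : En n) (r : ℝ) : ℝ :=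
  r ^ 2 * invAvg n ω y r ^ ((n : ℝ)⁻¹)

/-- The weighted parabolic cylinder `C_{r,ω}(y,s)`. -/
def cylC (n : ℕ) (ω : En n → ℝ) (y : En n) (s r : ℝ) : Set (En n × ℝ) :=
  ball y r ×ˢ Ioo (s - cylHeight n ω y r) s

/-- The weighted parabolic cylinder `Q_{r,ω}(y,s)`. -/
def cylQ (n : ℕ) (ω : En n → ℝ) (y : En n) (s r : ℝ) : Set (En n × ℝ) :=
  ball y r ×ˢ Ioo (s - cylHeight n ω y r) (s + cylHeight n ω y r)

/-- Parabolic boundary of the cylinder `B_r(y) × (a, b)`. -/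
def parBdry (n : ℕ) (y : En n) (r a b : ℝ) : Set (En n × ℝ) :=
  (sphere y r ×ˢ Ioo a b) ∪ (closedBall y r ×ˢ ({a} : Set ℝ))

/-- Parabolic boundary of `C_{r,ω}(y,s)`. -/
def parBdryC (n : ℕ) (ω : En n → ℝ) (y : En n) (s r : ℝ) : Set (En n × ℝ) :=
  parBdry n y r (s - cylHeight n ω y r) s

/-- Parabolic boundary of `Q_{r,ω}(y,s)`. -/
def parBdryQ (n : ℕ) (ω : En n → ℝ) (y : En n) (s r : ℝ) : Set (En n × ℝ) :=
  parBdry n y r (s - cylHeight n ω y r) (s + cylHeight n ω y r)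

/-- Time derivative `u_t`. -/
def pderivT (n : ℕ) (u : En n × ℝ → ℝ) (p : En n × ℝ) : ℝ :=
  deriv (fun t => u (p.1, t)) p.2

/-- First spatial partial derivative `D_i u`. -/
def pderivX (n : ℕ) (u : En n × ℝ → ℝ) (i : Fin n) (p : En n × ℝ) : ℝ :=
  fderiv ℝ (fun x => u (x, p.2)) p.1 (EuclideanSpace.single i 1)

/-- Second spatial partial derivative `D_{ij} u`. -/
def pderivXX (n : ℕ) (u : En n × ℝ → ℝ) (i j : Fin n) (p : En n × ℝ) : ℝ :=
  pderivX n (fun q => pderivX n u j q) i p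

/-- Frobenius norm `|D²u|` of the spatial Hessian. -/
def hessNorm (n : ℕ) (u : En n × ℝ → ℝ) (p : En n × ℝ) : ℝ :=
  Real.sqrt (∑ i, ∑ j, (pderivXX n u i j p) ^ 2)

/-- The operator `L u = u_t − ω(x) a_{ij}(x,t) D_{ij} u`. -/
def parOp (n : ℕ) (ω : En n → ℝ) (a : Fin n → Fin n → En n × ℝ → ℝ)
    (u : En n × ℝ → ℝ) (p : En n × ℝ) : ℝ :=
  pderivT n u p - ω p.1 * ∑ i, ∑ j, a i j p * pderivXX n u i j p

/-- Membership in the weighted Sobolev space `W^{2,1}_{n+1}(U, ω)`. -/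
def MemW21 (n : ℕ) (U : Set (En n × ℝ)) (ω : En n → ℝ) (u : En n × ℝ → ℝ) : Prop :=
  LocallyIntegrableOn u U ∧
  (∀ i j : Fin n,
    IntegrableOn (fun p => |pderivXX n u i j p| ^ ((n : ℝ) + 1) * ω p.1) U) ∧
  IntegrableOn (fun p => |pderivT n u p| ^ ((n : ℝ) + 1) * (ω p.1) ^ (-(n : ℝ))) U

/-- Symmetry, uniform ellipticity and boundedness of the coefficients `(a_{ij})`. -/
def Elliptic (n : ℕ) (ν : ℝ) (a : Fin n → Fin n → En n × ℝ → ℝ) : Prop :=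
  (∀ i j p, a i j p = a j i p) ∧
  (∀ (p : En n × ℝ) (ξ : En n), ν * ‖ξ‖ ^ 2 ≤ ∑ i, ∑ j, a i j p * ξ i * ξ j) ∧
  (∀ i j p, |a i j p| ≤ ν⁻¹)

/-- Weighted measure `ω(U) = ∫_U ω(x) dx dt` of a space-time set. -/
def wMeasST (n : ℕ) (ω : En n → ℝ) (U : Set (En n × ℝ)) : ℝ :=
  ∫ p in U, ω p.1

/-- The class `𝕃^∞_{ν,k}(K₀)` of operators with smooth truncated coefficients. -/
def SmoothClass (n k : ℕ) (ν K₀ : ℝ) (ω : En n → ℝ)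
    (a : Fin n → Fin n → En n × ℝ → ℝ) : Prop :=
  ContDiff ℝ (⊤ : ℕ∞) ω ∧ (∀ i j, ContDiff ℝ (⊤ : ℕ∞) (a i j)) ∧
  (∀ x, (k : ℝ)⁻¹ ≤ ω x ∧ ω x ≤ k) ∧
  apNorm n (1 + (n : ℝ)⁻¹) ω ≤ ENNReal.ofReal K₀ ∧
  Elliptic n ν a


/-- Weighted mean oscillation of the lower truncation of a weight (Lemma 2.8). -/
theorem statement13
    (n : ℕ) (hn : 0 < n) (p : ℝ) (hp : 1 < p) (μ : En n → ℝ)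
    (hμ0 : ∀ x, 0 ≤ μ x) (hμloc : LocallyIntegrable μ)
    (hμAp : apNorm n p μ < ⊤) :
    ∀ k : ℝ, 0 < k → ∀ R₀ : ℝ, 0 < R₀ →
      wBMO n (ball (0 : En n) R₀) (fun x => max k (μ x)) (fun x => max k (μ x)) ≤
        2 * wBMO n (ball (0 : En n) R₀) μ μ := by
  intro k hk R₀ hR₀
  rw [wBMO]
  refine iSup_le fun y => iSup_le fun r => iSup_le fun hr => iSup_le fun hsub => ?_
  set T : En n → ℝ := fun x => max k (μ x) with hT
  set B : Set (En n) := ball y r with hB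
  haveI hfin : IsFiniteMeasure (volume.restrict B) :=
    ⟨by rw [Measure.restrict_apply_univ]; exact measure_ball_lt_top⟩
  have hVpos : (0 : ℝ) < (volume B).toReal := by
    refine ENNReal.toReal_pos (ne_of_gt (measure_ball_pos volume y hr)) (ne_of_lt measure_ball_lt_top)
  set V : ℝ := (volume B).toReal with hV
  -- integrability
  have hμB : IntegrableOn μ B := by
    exact (hμloc.integrableOn_isCompact (isCompact_closedBall y r)).mono_set
      ball_subset_closedBall
  have hTnonneg : ∀ x, 0 ≤ T x := fun x => le_trans hk.le (le_max_left _ _)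
  have hTB : IntegrableOn T B := by
    refine ((integrable_const k).add hμB).mono'
      (aestronglyMeasurable_const.sup hμB.aestronglyMeasurable) (ae_of_all _ fun x => ?_)
    have : T x ≤ k + μ x := max_le (le_add_of_nonneg_right (hμ0 x)) (le_add_of_nonneg_left hk.le)
    simpa [abs_of_nonneg (hTnonneg x)] using this
  set a : ℝ := ballAvg n μ y r with ha
  set c : ℝ := max k a with hc
  set N : ℝ := ∫ x in B, |μ x - a| with hNdef
  set M : ℝ := ∫ x in B, μ x with hMdef
  set D : ℝ := ∫ x in B, T x with hDdef
  set aT : ℝ := ballAvg n T y r with haT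
  have hNnonneg : 0 ≤ N := integral_nonneg fun x => abs_nonneg _
  have hTcInt : Integrable (fun x => |T x - c|) (volume.restrict B) :=
    (hTB.sub (integrable_const c)).abs
  have hμaInt : Integrable (fun x => |μ x - a|) (volume.restrict B) :=
    (hμB.sub (integrable_const a)).abs
  have hTaTInt : Integrable (fun x => |T x - aT|) (volume.restrict B) :=
    (hTB.sub (integrable_const aT)).abs
  have hAint : ∫ x in B, |T x - aT| ≤ 2 * N := by
    have key : ∀ x, |T x - c| ≤ |μ x - a| := by
      intro x
      have := abs_max_sub_max_le_abs (μ x) a k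
      simpa [hc, max_comm, T] using this
    have hTc : ∫ x in B, |T x - c| ≤ N := setIntegral_mono hTcInt hμaInt key
    have haTval : aT = V⁻¹ * D := by
      rw [haT, ballAvg, setAverage_eq, smul_eq_mul, ← hB, ← hDdef, measureReal_def, ← hV]
    have hcaT : V * |c - aT| ≤ N := by
      have h1 : V * |c - aT| = |V * c - D| := by
        have h0 : V * c - D = V * (c - aT) := by
          rw [haTval]; field_simp
        rw [h0, abs_mul, abs_of_pos hVpos]
      have h2 : V * c - D = ∫ x in B, (c - T x) := by
        rw [integral_sub (integrable_const c) hTB, setIntegral_const, smul_eq_mul, measureReal_def, ← hV, ← hDdef]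
      have h3 : |∫ x in B, (c - T x)| ≤ ∫ x in B, |c - T x| := by
        simpa [Real.norm_eq_abs] using
          norm_integral_le_integral_norm (f := fun x => c - T x) (μ := volume.restrict B)
      have h4 : ∫ x in B, |c - T x| ≤ N := by
        simpa [abs_sub_comm] using hTc
      rw [h1, h2]
      exact h3.trans h4
    calc ∫ x in B, |T x - aT| ≤ ∫ x in B, (|T x - c| + |c - aT|) := by
          refine setIntegral_mono hTaTInt (hTcInt.add (integrable_const _)) fun x => ?_
          calc |T x - aT| = |(T x - c) + (c - aT)| := by ring_nf
            _ ≤ |T x - c| + |c - aT| := abs_add_le _ _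
      _ = (∫ x in B, |T x - c|) + V * |c - aT| := by
          rw [integral_add hTcInt (integrable_const _), setIntegral_const, smul_eq_mul, measureReal_def, ← hV]
      _ ≤ N + N := add_le_add hTc hcaT
      _ = 2 * N := by ring
  have hMD : M ≤ D := setIntegral_mono hμB hTB fun x => le_max_right _ _
  have hDpos : 0 < D := by
    have h5 : ∫ x in B, k ≤ D := setIntegral_mono (integrable_const k) hTB fun x => le_max_left _ _
    rw [setIntegral_const, smul_eq_mul, measureReal_def, ← hV] at h5
    exact lt_of_lt_of_le (by positivity) h5
  have hreal : (∫ x in B, |T x - aT|) / D ≤ 2 * (N / M) := by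
    by_cases hM : M = 0
    · have hμ0ae : μ =ᵐ[volume.restrict B] 0 :=
        (integral_eq_zero_iff_of_nonneg hμ0 hμB).mp hM
      have haval : a = 0 := by
        rw [ha, ballAvg, setAverage_eq, smul_eq_mul, ← hB, ← hMdef, hM, mul_zero]
      have hN0 : N = 0 := by
        rw [hNdef]
        rw [show (∫ x in B, |μ x - a|) = ∫ x in B, μ x from
          integral_congr_ae (hμ0ae.mono fun x hx => by
            simp [haval, hx, abs_of_nonneg (hμ0 x)])]
        exact hM
      have hA0 : ∫ x in B, |T x - aT| = 0 := by
        have h1 : 0 ≤ ∫ x in B, |T x - aT| := integral_nonneg fun x => abs_nonneg _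
        have h2 := hAint
        rw [hN0] at h2
        linarith
      rw [hA0, hN0]
      simp
    · have hMpos : 0 < M := lt_of_le_of_ne (integral_nonneg fun x => hμ0 x) (Ne.symm hM)
      calc (∫ x in B, |T x - aT|) / D ≤ (2 * N) / M :=
            div_le_div₀ (by positivity) hAint hMpos hMD
        _ = 2 * (N / M) := mul_div_assoc _ _ _
  calc ENNReal.ofReal ((∫ x in B, |T x - aT|) / D) ≤ ENNReal.ofReal (2 * (N / M)) :=
        ENNReal.ofReal_le_ofReal hreal
    _ = 2 * ENNReal.ofReal (N / M) := by
        rw [ENNReal.ofReal_mul (by norm_num : (0:ℝ) ≤ 2), ENNReal.ofReal_ofNat]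
    _ ≤ 2 * wBMO n (ball (0 : En n) R₀) μ μ := by
        refine mul_le_mul_right ?_ 2
        rw [wBMO]
        exact le_iSup_of_le y (le_iSup_of_le r (le_iSup_of_le hr (le_iSup_of_le hsub le_rfl)))

end
end

section
/- Let n ∈ ℕ and K₀ ≥ 1. There exists a constant N = N(n,K₀) > 0 such that for every μ ∈ A₂ on ℝⁿ with [μ]_{A₂} ≤ K₀, the upper truncation T^k∘μ (x) = min(k, μ(x)) satisfies [[T^k∘μ]]_{BMO(B_{R₀}, T^k∘μ)} ≤ N [[μ]]_{BMO(B_{R₀}, μ)} for all k > 0 and all R₀ > 0. -/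
open MeasureTheory Metric Set
open scoped ENNReal Topology

noncomputable section

/-- Mean oscillation is at most twice the oscillation around any constant. -/
lemma osc_le_two {α : Type*} [MeasurableSpace α] (ν : Measure α) [IsFiniteMeasure ν]
    (f : α → ℝ) (hf : Integrable f ν) (c : ℝ) :
    ∫ x, |f x - ⨍ x, f x ∂ν| ∂ν ≤ 2 * ∫ x, |f x - c| ∂ν := by
  by_cases hV : ν Set.univ = 0
  · have h0 : ν = 0 := by
      ext s hs
      exact le_antisymm ((measure_mono (Set.subset_univ s)).trans hV.le) zero_le
    simp [h0]
  set m := ⨍ x, f x ∂ν with hm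
  set V := (ν Set.univ).toReal with hVdef
  have hVpos : 0 < V := ENNReal.toReal_pos hV (measure_ne_top ν _)
  have hmv : V * m = ∫ x, f x ∂ν := by
    rw [hm, average_eq, smul_eq_mul]
    field_simp
    rw [show ν.real Set.univ = V from rfl]
    exact mul_div_cancel_left₀ _ hVpos.ne'
  have h1 : ∫ x, |f x - m| ∂ν ≤ ∫ x, (|f x - c| + |c - m|) ∂ν := by
    refine integral_mono ((hf.sub (integrable_const m)).abs)
      (((hf.sub (integrable_const c)).abs).add (integrable_const _)) ?_
    intro x
    calc |f x - m| = |(f x - c) + (c - m)| := by ring_nf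
      _ ≤ |f x - c| + |c - m| := abs_add_le _ _
  have hfc : Integrable (fun x => |f x - c|) ν := by
    simpa using (hf.sub (integrable_const c)).abs
  have h2 : ∫ x, (|f x - c| + |c - m|) ∂ν = ∫ x, |f x - c| ∂ν + |c - m| * V := by
    rw [integral_add hfc (integrable_const _), integral_const, smul_eq_mul, mul_comm]
    rfl
  have h3 : |c - m| * V ≤ ∫ x, |f x - c| ∂ν := by
    have e1 : ∫ x, (c - f x) ∂ν = V * c - V * m := by
      rw [integral_sub (integrable_const c) hf, integral_const, smul_eq_mul, hmv]
      rfl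
    have e2 : |c - m| * V = |∫ x, (c - f x) ∂ν| := by
      rw [e1, show V * c - V * m = V * (c - m) by ring, abs_mul, abs_of_nonneg hVpos.le,
        mul_comm]
    rw [e2]
    calc |∫ x, (c - f x) ∂ν| ≤ ∫ x, |c - f x| ∂ν := by
          simpa [Real.norm_eq_abs] using
            norm_integral_le_integral_norm (μ := ν) (f := fun x => c - f x)
      _ = ∫ x, |f x - c| ∂ν := by simp [abs_sub_comm]
  linarith

lemma trunc_ratio {α : Type*} [MeasurableSpace α] (ν : Measure α) [IsFiniteMeasure ν]
    (μ : α → ℝ) (hμ0 : ∀ x, 0 ≤ μ x) (hint : Integrable μ ν) (k : ℝ) (hk : 0 < k) :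
    (∫ x, |min k (μ x) - ⨍ x, min k (μ x) ∂ν| ∂ν) / (∫ x, min k (μ x) ∂ν) ≤
      4 * ((∫ x, |μ x - ⨍ x, μ x ∂ν| ∂ν) / (∫ x, μ x ∂ν)) := by
  have hμkmeas : AEStronglyMeasurable (fun x => min k (μ x)) ν :=
    (continuous_const.min continuous_id).comp_aestronglyMeasurable hint.aestronglyMeasurable
  have hμkint : Integrable (fun x => min k (μ x)) ν := by
    refine hint.mono hμkmeas (Filter.Eventually.of_forall fun x => ?_)
    have h0 : 0 ≤ min k (μ x) := le_min hk.le (hμ0 x)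
    simp only [Real.norm_eq_abs, abs_of_nonneg h0, abs_of_nonneg (hμ0 x)]
    exact min_le_right _ _
  set V := (ν Set.univ).toReal with hVdef
  set I := ∫ x, μ x ∂ν with hIdef
  set Ik := ∫ x, min k (μ x) ∂ν with hIkdef
  set m := ⨍ x, μ x ∂ν with hmdef
  set mk := ⨍ x, min k (μ x) ∂ν with hmkdef
  set A := ∫ x, |μ x - m| ∂ν with hAdef
  set Ak := ∫ x, |min k (μ x) - mk| ∂ν with hAkdef
  have hAint : Integrable (fun x => |μ x - m|) ν := (hint.sub (integrable_const m)).abs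
  have hAkint : Integrable (fun x => |min k (μ x) - mk|) ν :=
    (hμkint.sub (integrable_const mk)).abs
  have hI0 : 0 ≤ I := integral_nonneg hμ0
  have hIk0 : 0 ≤ Ik := integral_nonneg fun x => le_min hk.le (hμ0 x)
  have hA0 : 0 ≤ A := integral_nonneg fun x => abs_nonneg _
  have hAk0 : 0 ≤ Ak := integral_nonneg fun x => abs_nonneg _
  rcases eq_or_lt_of_le hI0 with hI | hI
  · -- degenerate: ∫ μ = 0
    have hz : μ =ᵐ[ν] 0 :=
      (integral_eq_zero_iff_of_nonneg hμ0 hint).mp hI.symm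
    have hzk : (fun x => min k (μ x)) =ᵐ[ν] 0 := by
      filter_upwards [hz] with x hx
      simp [hx, min_eq_right hk.le]
    have hmk0 : mk = 0 := by
      rw [hmkdef, average_congr hzk]
      simp [average]
    have hAkz : Ak = 0 := by
      rw [hAkdef]
      rw [integral_congr_ae (g := fun _ => (0:ℝ))]
      · simp
      · filter_upwards [hzk] with x hx
        simp [hx, hmk0]
    rw [hAkz, ← hI]
    simp
  · -- main case : 0 < I
    have hVne : ν Set.univ ≠ 0 := by
      intro h
      have h0 : ν = 0 := by
        ext s hs
        exact le_antisymm ((measure_mono (Set.subset_univ s)).trans h.le) zero_le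
      rw [hIdef, h0] at hI
      simp at hI
    have hVpos : 0 < V := ENNReal.toReal_pos hVne (measure_ne_top ν _)
    have hmv : V * m = I := by
      rw [hmdef, average_eq, smul_eq_mul]
      field_simp
      rw [show ν.real Set.univ = V from rfl]
      exact mul_div_cancel_left₀ _ hVpos.ne'
    have hmpos : 0 < m := by
      by_contra h
      push_neg at h
      nlinarith
    have hmkv : V * mk = Ik := by
      rw [hmkdef, average_eq, smul_eq_mul]
      field_simp
      rw [show ν.real Set.univ = V from rfl]
      exact mul_div_cancel_left₀ _ hVpos.ne'
    have hmk0 : 0 ≤ mk := by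
      have h : 0 ≤ V * mk := by rw [hmkv]; exact hIk0
      nlinarith
    -- F0 : Ak ≤ 2 * Ik
    have fact0 : Ak ≤ 2 * Ik := by
      have h1 : Ak ≤ ∫ x, (min k (μ x) + mk) ∂ν := by
        refine integral_mono hAkint (hμkint.add (integrable_const _)) fun x => ?_
        have h0 : 0 ≤ min k (μ x) := le_min hk.le (hμ0 x)
        exact abs_le.mpr ⟨by linarith, by linarith⟩
      have h2 : ∫ x, (min k (μ x) + mk) ∂ν = Ik + mk * V := by
        rw [integral_add hμkint (integrable_const _), integral_const, smul_eq_mul, mul_comm]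
        rfl
      rw [h2] at h1
      linarith [hmkv]
    by_cases hAI : I ≤ 2 * A
    · -- big-oscillation case: ratio ≤ 2 ≤ 4 (A/I)
      have hL : Ak / Ik ≤ 2 := by
        rcases eq_or_lt_of_le hIk0 with h | h
        · rw [← h, div_zero]; norm_num
        · rw [div_le_iff₀ h]; linarith
      have hR : (2:ℝ) ≤ 4 * (A / I) := by
        have : (1:ℝ)/2 ≤ A / I := (le_div_iff₀ hI).mpr (by linarith)
        linarith
      linarith
    · push_neg at hAI
      rcases le_or_gt m k with hmk | hkm
      · -- m ≤ k
        have hP2 : ∀ x, |min k (μ x) - m| ≤ |μ x - m| := by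
          intro x
          rcases le_total (μ x) k with h | h
          · rw [min_eq_right h]
          · rw [min_eq_left h, abs_of_nonneg (by linarith)]
            have := le_abs_self (μ x - m)
            linarith
        have hP1 : ∀ x, μ x - min k (μ x) ≤ |μ x - m| := by
          intro x
          rcases le_total (μ x) k with h | h
          · rw [min_eq_right h]; simpa using abs_nonneg (μ x - m)
          · rw [min_eq_left h]
            have := le_abs_self (μ x - m)
            linarith
        have hint2 : Integrable (fun x => |min k (μ x) - m|) ν := by
          simpa using (hμkint.sub (integrable_const m)).abs
        have hAk2A : Ak ≤ 2 * A := by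
          calc Ak ≤ 2 * ∫ x, |min k (μ x) - m| ∂ν := osc_le_two ν _ hμkint m
            _ ≤ 2 * A := by
              have := integral_mono hint2 hAint hP2
              linarith
        have hIkI : I - A ≤ Ik := by
          have e : I - Ik = ∫ x, (μ x - min k (μ x)) ∂ν := (integral_sub hint hμkint).symm
          have hle : ∫ x, (μ x - min k (μ x)) ∂ν ≤ A :=
            integral_mono (hint.sub hμkint) hAint hP1
          linarith
        have hIk2 : I / 2 ≤ Ik := by linarith
        calc Ak / Ik ≤ (2 * A) / (I / 2) :=
              div_le_div₀ (by linarith) hAk2A (by linarith) hIk2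
          _ = 4 * (A / I) := by field_simp; ring
      · -- k < m
        have hP3 : ∀ x, |min k (μ x) - k| ≤ (k / m) * |μ x - m| := by
          intro x
          rcases le_total k (μ x) with h | h
          · rw [min_eq_left h]
            simp only [sub_self, abs_zero]
            positivity
          · rw [min_eq_right h, abs_of_nonpos (by linarith), abs_of_nonpos (by linarith)]
            rw [div_mul_eq_mul_div, le_div_iff₀ hmpos]
            nlinarith [hμ0 x]
        have hP3int : Integrable (fun x => (k / m) * |μ x - m|) ν := hAint.const_mul _
        have hkmA : ∫ x, ((k / m) * |μ x - m|) ∂ν = (k / m) * A :=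
          integral_const_mul _ _
        have hint3 : Integrable (fun x => |min k (μ x) - k|) ν := by
          simpa using (hμkint.sub (integrable_const k)).abs
        have hnum : Ak ≤ 2 * ((k / m) * A) := by
          calc Ak ≤ 2 * ∫ x, |min k (μ x) - k| ∂ν := osc_le_two ν _ hμkint k
            _ ≤ 2 * ((k / m) * A) := by
              have := integral_mono hint3 hP3int hP3
              rw [hkmA] at this
              linarith
        have hden : k * V - (k / m) * A ≤ Ik := by
          have e : k * V - Ik = ∫ x, (k - min k (μ x)) ∂ν := by
            rw [integral_sub (integrable_const k) hμkint, integral_const, smul_eq_mul,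
              mul_comm]
            rfl
          have hle : ∫ x, (k - min k (μ x)) ∂ν ≤ (k / m) * A := by
            have hpt : ∀ x, k - min k (μ x) ≤ (k / m) * |μ x - m| := by
              intro x
              have h := hP3 x
              rw [abs_of_nonpos (by simp [min_le_left])] at h
              linarith
            have := integral_mono ((integrable_const k).sub hμkint) hP3int hpt
            rw [hkmA] at this
            exact this
          linarith
        have hA_half : (k / m) * A ≤ k * V / 2 := by
          have hAhalf : A ≤ m * V / 2 := by nlinarith
          have hkm0 : 0 < k / m := div_pos hk hmpos
          calc (k / m) * A ≤ (k / m) * (m * V / 2) := by nlinarith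
            _ = k * V / 2 := by field_simp
        have hIk2 : k * V / 2 ≤ Ik := by linarith
        calc Ak / Ik ≤ (2 * ((k / m) * A)) / (k * V / 2) :=
              div_le_div₀ (by positivity) hnum (by positivity) hIk2
          _ = 4 * (A / I) := by
            rw [← hmv]
            field_simp
            ring

/-- Weighted mean oscillation of the upper truncation of an `A₂` weight (Lemma 2.10). -/
theorem statement15
    (n : ℕ) (hn : 0 < n) (K₀ : ℝ) (hK₀ : 1 ≤ K₀) :
    ∃ N > (0 : ℝ),
      ∀ μ : En n → ℝ,
        (∀ x, 0 ≤ μ x) → LocallyIntegrable μ →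
        apNorm n 2 μ ≤ ENNReal.ofReal K₀ →
        ∀ k : ℝ, 0 < k → ∀ R₀ : ℝ, 0 < R₀ →
          wBMO n (ball (0 : En n) R₀) (fun x => min k (μ x)) (fun x => min k (μ x)) ≤
            ENNReal.ofReal N * wBMO n (ball (0 : En n) R₀) μ μ := by
  refine ⟨4, by norm_num, ?_⟩
  intro μ hμ0 hloc _ k hk R₀ hR₀
  rw [wBMO]
  refine iSup_le fun y => iSup_le fun r => iSup_le fun hr => iSup_le fun hsub => ?_
  have hfin : IsFiniteMeasure (volume.restrict (ball y r)) :=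
    ⟨by simpa [Measure.restrict_apply_univ] using measure_ball_lt_top (x := y) (r := r)⟩
  have hint : Integrable μ (volume.restrict (ball y r)) :=
    ((hloc.integrableOn_isCompact (isCompact_closedBall y r)).mono_set
      ball_subset_closedBall)
  have key := trunc_ratio (volume.restrict (ball y r)) μ hμ0 hint k hk
  have hstep : ENNReal.ofReal
      ((∫ x in ball y r, |min k (μ x) - ballAvg n (fun x => min k (μ x)) y r|) /
        (∫ x in ball y r, min k (μ x))) ≤
      ENNReal.ofReal (4 * ((∫ x in ball y r, |μ x - ballAvg n μ y r|) /
        (∫ x in ball y r, μ x))) := by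
    apply ENNReal.ofReal_le_ofReal
    simpa [ballAvg] using key
  refine hstep.trans ?_
  rw [ENNReal.ofReal_mul (by norm_num : (0:ℝ) ≤ 4)]
  refine mul_le_mul_right ?_ _
  rw [wBMO]
  exact le_iSup_of_le y (le_iSup_of_le r (le_iSup_of_le hr (le_iSup_of_le hsub le_rfl)))


end
end

section
/- Let n ∈ ℕ and K₀ ≥ 1. There exists a constant N̄₀ = N̄₀(n,K₀) > 0 such that the following holds. Let μ ∈ A₂ on ℝⁿ with [μ]_{A₂} ≤ K₀, let 0 < s < τ < ∞, and define the two-sided truncation μ̄(x) = μ(x) if s ≤ μ(x) ≤ τ, μ̄(x) = s if μ(x) < s, and μ̄(x) = τ if μ(x) > τ. Then for every R₀ > 0, [[μ̄]]_{BMO(B_{R₀}, μ̄)} ≤ N̄₀ [[μ]]_{BMO(B_{R₀}, μ)}. -/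
open MeasureTheory Metric Set
open scoped ENNReal Topology

noncomputable section

lemma trunc_lip (s τ x y : ℝ) : |max s (min x τ) - max s (min y τ)| ≤ |x - y| := by
  calc |max s (min x τ) - max s (min y τ)| ≤ max |s - s| |min x τ - min y τ| :=
        abs_max_sub_max_le_max _ _ _ _
    _ ≤ |x - y| := by
        simp only [sub_self, abs_zero, max_le_iff]
        refine ⟨abs_nonneg _, ?_⟩
        calc |min x τ - min y τ| ≤ max |x - y| |τ - τ| := abs_min_sub_min_le_max _ _ _ _
          _ = |x - y| := by simp

lemma key1 (s τ A a : ℝ) (hs : 0 < s) (hsτ : s < τ) (hA : 0 < A) (ha : 0 ≤ a) :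
    A * |max s (min a τ) - max s (min A τ)| ≤ min A τ * |a - A| := by
  have hτ : 0 < τ := hs.trans hsτ
  rcases le_total A τ with h | h
  · have h' := trunc_lip s τ a A
    rw [min_eq_left h] at h' ⊢
    exact mul_le_mul_of_nonneg_left h' hA.le
  · rw [min_eq_right h, max_eq_right hsτ.le]
    rcases le_total τ a with h2 | h2
    · rw [min_eq_right h2, max_eq_right hsτ.le, sub_self, abs_zero, mul_zero]
      positivity
    · rw [min_eq_left h2]
      rcases le_total s a with h3 | h3
      · rw [max_eq_right h3, abs_of_nonpos (by linarith), abs_of_nonpos (by linarith)]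
        nlinarith
      · rw [max_eq_left h3, abs_of_nonpos (by linarith), abs_of_nonpos (by linarith)]
        nlinarith

lemma key2 (s τ A a : ℝ) (hs : 0 < s) (hsτ : s < τ) (hA : 0 < A) (ha : 0 ≤ a) :
    A * min A τ ≤ 2 * (A * max s (min a τ)) + 2 * (min A τ * |a - A|) := by
  have hτ : 0 < τ := hs.trans hsτ
  have ht : 0 < min A τ := lt_min hA hτ
  have htA : min A τ ≤ A := min_le_left _ _
  have htτ : min A τ ≤ τ := min_le_right _ _
  have habs : A - a ≤ |a - A| := by rw [abs_sub_comm]; exact le_abs_self _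
  have hM : min a τ ≤ max s (min a τ) := le_max_right _ _
  have hM0 : (0:ℝ) ≤ max s (min a τ) := hs.le.trans (le_max_left _ _)
  rcases le_total a (min A τ / 2) with h | h
  · nlinarith [abs_nonneg (a - A), mul_nonneg hA.le hM0]
  · have h5 : min A τ / 2 ≤ min a τ := le_min h (by linarith)
    nlinarith [abs_nonneg (a - A), mul_nonneg ht.le (abs_nonneg (a - A))]

set_option maxHeartbeats 1000000 in
/-- Weighted mean oscillation of the two-sided truncation of an `A₂` weight
(Proposition 2.11). -/
theorem statement16
    (n : ℕ) (hn : 0 < n) (K₀ : ℝ) (hK₀ : 1 ≤ K₀) :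
    ∃ N₀ > (0 : ℝ),
      ∀ μ : En n → ℝ,
        (∀ x, 0 ≤ μ x) → LocallyIntegrable μ →
        apNorm n 2 μ ≤ ENNReal.ofReal K₀ →
        ∀ s τ : ℝ, 0 < s → s < τ →
          ∀ R₀ : ℝ, 0 < R₀ →
            wBMO n (ball (0 : En n) R₀)
                (fun x => max s (min (μ x) τ)) (fun x => max s (min (μ x) τ)) ≤
              ENNReal.ofReal N₀ * wBMO n (ball (0 : En n) R₀) μ μ := by
  refine ⟨8, by norm_num, ?_⟩
  intro μ hμ0 hμloc _hA2 s τ hs hsτ R₀ _hR₀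
  have hτpos : 0 < τ := hs.trans hsτ
  rw [wBMO]
  refine iSup_le fun y => iSup_le fun r => iSup_le fun hr => iSup_le fun hsub => ?_
  set ν : En n → ℝ := fun x => max s (min (μ x) τ) with hνdef
  set B := ball y r with hB
  have hBmeas : MeasurableSet B := measurableSet_ball
  have hVpos : 0 < (volume B).toReal :=
    ENNReal.toReal_pos (measure_ball_pos volume y hr).ne' measure_ball_lt_top.ne
  set V := (volume B).toReal with hV
  have hμint : IntegrableOn μ B :=
    (hμloc.integrableOn_isCompact (isCompact_closedBall y r)).mono_set ball_subset_closedBall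
  have hνb : ∀ x, s ≤ ν x ∧ ν x ≤ τ := fun x =>
    ⟨le_max_left _ _, max_le hsτ.le (min_le_right _ _)⟩
  have hνmeas : AEStronglyMeasurable ν volume :=
    (aemeasurable_const.max
      (hμloc.aestronglyMeasurable.aemeasurable.min aemeasurable_const)).aestronglyMeasurable
  have hconst : ∀ c : ℝ, IntegrableOn (fun _ => c) B volume := fun c =>
    integrableOn_const measure_ball_lt_top.ne enorm_ne_top
  have hνint : IntegrableOn ν B := by
    refine Integrable.mono' (hconst τ) hνmeas.restrict ?_
    refine Filter.Eventually.of_forall fun x => ?_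
    rw [Real.norm_eq_abs, abs_of_nonneg (hs.le.trans (hνb x).1)]
    exact (hνb x).2
  set Iμ := ∫ x in B, μ x with hIμ
  set Iν := ∫ x in B, ν x with hIν
  have hIν_lb : s * V ≤ Iν := by
    have h := setIntegral_mono_on (hconst s) hνint hBmeas (fun x _ => (hνb x).1)
    rwa [setIntegral_const, smul_eq_mul, mul_comm] at h
  have hIνpos : 0 < Iν := lt_of_lt_of_le (by positivity) hIν_lb
  set A := ballAvg n μ y r with hAdef
  have hA_eq : A = V⁻¹ * Iμ := by rw [hAdef, ballAvg, setAverage_eq, smul_eq_mul]; rfl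
  set Aν := ballAvg n ν y r with hAνdef
  have hAν_eq : Aν = V⁻¹ * Iν := by rw [hAνdef, ballAvg, setAverage_eq, smul_eq_mul]; rfl
  set osc := ∫ x in B, |μ x - A| with hosc
  set oscν := ∫ x in B, |ν x - Aν| with hoscν
  have hosc0 : 0 ≤ osc := setIntegral_nonneg hBmeas fun x _ => abs_nonneg _
  have hoscν0 : 0 ≤ oscν := setIntegral_nonneg hBmeas fun x _ => abs_nonneg _
  have hIμ0 : 0 ≤ Iμ := setIntegral_nonneg hBmeas fun x _ => hμ0 x
  have h_int_A : IntegrableOn (fun x => |μ x - A|) B := (hμint.sub (hconst A)).abs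
  have hterm : ENNReal.ofReal (osc / Iμ) ≤ wBMO n (ball (0 : En n) R₀) μ μ := by
    rw [wBMO]
    exact le_iSup_of_le y (le_iSup_of_le r (le_iSup_of_le hr (le_iSup_of_le hsub le_rfl)))
  have main : oscν / Iν ≤ 8 * (osc / Iμ) := by
    rcases eq_or_lt_of_le hIμ0 with h0 | hIμpos
    · -- degenerate case : μ = 0 a.e. on B
      have hμae : μ =ᵐ[volume.restrict B] 0 := by
        rw [← integral_eq_zero_iff_of_nonneg_ae
          (Filter.Eventually.of_forall fun x => hμ0 x) hμint]
        exact h0.symm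
      have hνae : ν =ᵐ[volume.restrict B] fun _ => s := by
        filter_upwards [hμae] with x hx
        simp only [hνdef, Pi.zero_apply] at hx ⊢
        rw [hx, min_eq_left hτpos.le, max_eq_left hs.le]
      have hAν_s : Aν = s := by
        rw [hAνdef, ballAvg, average_congr hνae,
          setAverage_const (measure_ball_pos volume y hr).ne' measure_ball_lt_top.ne]
      have hoscν_0 : oscν = 0 := by
        rw [hoscν]
        rw [integral_congr_ae (g := fun _ => (0:ℝ)) ?_, integral_zero]
        filter_upwards [hνae] with x hx
        rw [hx, hAν_s, sub_self, abs_zero]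
      rw [hoscν_0, zero_div]
      positivity
    · have hApos : 0 < A := by rw [hA_eq]; positivity
      set t := min A τ with htdef
      have htpos : 0 < t := lt_min hApos hτpos
      set c := max s (min A τ) with hcdef
      set J := ∫ x in B, |ν x - c| with hJ
      have h_int_c : IntegrableOn (fun x => |ν x - c|) B := (hνint.sub (hconst c)).abs
      have hJ0 : 0 ≤ J := setIntegral_nonneg hBmeas fun x _ => abs_nonneg _
      have h2 : A * J ≤ t * osc := by
        have h := setIntegral_mono_on (h_int_c.const_mul A) (h_int_A.const_mul t) hBmeas
          (fun x _ => key1 s τ A (μ x) hs hsτ hApos (hμ0 x))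
        rwa [integral_const_mul, integral_const_mul] at h
      have hVI : V * Aν = Iν := by rw [hAν_eq]; field_simp
      have habs1 : |c - Aν| * V ≤ J := by
        have e : (c - Aν) * V = ∫ x in B, (c - ν x) := by
          rw [integral_sub (hconst c) hνint, setIntegral_const, smul_eq_mul, hAν_eq]
          change (c - V⁻¹ * Iν) * V = V * c - Iν
          field_simp
        calc |c - Aν| * V = |(c - Aν) * V| := by rw [abs_mul, abs_of_pos hVpos]
          _ = |∫ x in B, (c - ν x)| := by rw [e]
          _ ≤ ∫ x in B, |c - ν x| := by
              simpa [Real.norm_eq_abs] using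
                norm_integral_le_integral_norm (μ := volume.restrict B) (fun x => c - ν x)
          _ = J := integral_congr_ae (Filter.Eventually.of_forall fun x => abs_sub_comm c (ν x))
      have h1 : oscν ≤ 2 * J := by
        have h := setIntegral_mono_on (f := fun x => |ν x - Aν|)
          (g := fun x => |ν x - c| + |c - Aν|) ((hνint.sub (hconst Aν)).abs)
          (h_int_c.add (hconst |c - Aν|)) hBmeas
          (fun x _ => abs_sub_le (ν x) c Aν)
        rw [integral_add h_int_c (hconst _), setIntegral_const, smul_eq_mul] at h
        change oscν ≤ J + V * |c - Aν| at h
        nlinarith [habs1]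
      have hAν0 : 0 ≤ Aν := by rw [hAν_eq]; positivity
      have h3 : oscν ≤ 2 * Iν := by
        have hpt : ∀ x ∈ B, |ν x - Aν| ≤ ν x + Aν := fun x _ => by
          have h0 : 0 ≤ ν x := hs.le.trans (hνb x).1
          have h5 := abs_add_le (ν x) (-Aν)
          rw [abs_neg] at h5
          rw [sub_eq_add_neg]
          exact h5.trans (by rw [abs_of_nonneg h0, abs_of_nonneg hAν0])
        have h := setIntegral_mono_on (f := fun x => |ν x - Aν|)
          (g := fun x => ν x + Aν) ((hνint.sub (hconst Aν)).abs)
          (hνint.add (hconst Aν)) hBmeas hpt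
        rw [integral_add hνint (hconst _), setIntegral_const, smul_eq_mul] at h
        change oscν ≤ Iν + V * Aν at h
        nlinarith [hVI]
      have h4 : V * (A * t) ≤ 2 * (A * Iν) + 2 * (t * osc) := by
        have h := setIntegral_mono_on (f := fun _ => A * t)
          (g := fun x => 2 * (A * ν x) + 2 * (t * |μ x - A|)) (hconst (A * t))
          (((hνint.const_mul A).const_mul 2).add ((h_int_A.const_mul t).const_mul 2)) hBmeas
          (fun x _ => key2 s τ A (μ x) hs hsτ hApos (hμ0 x))
        rwa [setIntegral_const, smul_eq_mul,
          integral_add ((hνint.const_mul A).const_mul 2) ((h_int_A.const_mul t).const_mul 2),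
          integral_const_mul, integral_const_mul, integral_const_mul, integral_const_mul] at h
      clear_value V Iμ Iν A Aν osc oscν t c J
      have hIμ_eq : Iμ = A * V := by rw [hA_eq]; field_simp
      have hgoal : 8 * (osc / Iμ) = (8 * osc) / Iμ := by ring
      rw [hgoal, div_le_div_iff₀ hIνpos hIμpos, hIμ_eq]
      have final : oscν * (A * V) * t ≤ 8 * osc * Iν * t := by
        have e1 : oscν * (V * (A * t)) ≤ oscν * (2 * (A * Iν) + 2 * (t * osc)) :=
          mul_le_mul_of_nonneg_left h4 hoscν0
        have e2 : oscν * (2 * (A * Iν)) ≤ 2 * J * (2 * (A * Iν)) :=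
          mul_le_mul_of_nonneg_right h1 (by positivity)
        have e3 : A * J * (4 * Iν) ≤ t * osc * (4 * Iν) :=
          mul_le_mul_of_nonneg_right h2 (by positivity)
        have e4 : oscν * (2 * (t * osc)) ≤ 2 * Iν * (2 * (t * osc)) :=
          mul_le_mul_of_nonneg_right h3 (by positivity)
        ring_nf at e1 e2 e3 e4 ⊢
        linarith [e1, e2, e3, e4]
      exact le_of_mul_le_mul_right final htpos
  calc ENNReal.ofReal (oscν / Iν) ≤ ENNReal.ofReal (8 * (osc / Iμ)) :=
        ENNReal.ofReal_le_ofReal main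
    _ = ENNReal.ofReal 8 * ENNReal.ofReal (osc / Iμ) := ENNReal.ofReal_mul (by norm_num)
    _ ≤ ENNReal.ofReal 8 * wBMO n (ball (0 : En n) R₀) μ μ := mul_le_mul_right hterm _

end
end

section
/- Let n ∈ ℕ and ν ∈ (0,1). Let A be a real symmetric n×n matrix satisfying ν|ξ|² ≤ ξᵀAξ ≤ ν^{−1}|ξ|² for all ξ ∈ ℝⁿ, and let M be any real symmetric n×n matrix. Then there exists a real symmetric n×n matrix A₀ all of whose eigenvalues lie in the two-element set {ν/2, 2/ν} (in particular (ν/2)|ξ|² ≤ ξᵀA₀ξ ≤ (2/ν)|ξ|² for all ξ) such that tr(AM) − tr(A₀M) ≥ (ν/2)·‖M‖_F, where ‖M‖_F = √(tr(M²)) is the Frobenius norm of M. Moreover, A₀ can be taken of the form A₀ = B · diag(ν/2, …, ν/2, 2/ν, …, 2/ν) · Bᵀ, where B is an orthogonal matrix diagonalizing M with the nonnegative eigenvalues of M listed first. -/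
open Matrix

noncomputable section

private lemma quad_eq {n : ℕ} (Q : Matrix (Fin n) (Fin n) ℝ) (ξ : Fin n → ℝ) :
    ∑ i, ∑ j, Q i j * ξ i * ξ j = ξ ⬝ᵥ (Q *ᵥ ξ) := by
  simp only [dotProduct, mulVec, Finset.mul_sum]
  refine Finset.sum_congr rfl fun i _ => Finset.sum_congr rfl fun j _ => by ring

private lemma quad_conj {n : ℕ} (B D : Matrix (Fin n) (Fin n) ℝ) (ξ : Fin n → ℝ) :
    ξ ⬝ᵥ ((B * D * Bᵀ) *ᵥ ξ) = (Bᵀ *ᵥ ξ) ⬝ᵥ (D *ᵥ (Bᵀ *ᵥ ξ)) := by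
  rw [← mulVec_mulVec, ← mulVec_mulVec, dotProduct_mulVec, mulVec_transpose]

private lemma diag_quad {n : ℕ} (d η : Fin n → ℝ) :
    η ⬝ᵥ ((Matrix.diagonal d) *ᵥ η) = ∑ i, d i * η i ^ 2 := by
  simp only [dotProduct, mulVec_diagonal]
  exact Finset.sum_congr rfl fun i _ => by ring

private lemma real_star_id : (⇑(starRingEnd ℝ)) = id := funext fun x => star_trivial x

/-- Lin's auxiliary matrix construction: for a uniformly elliptic symmetric matrix `A`
and any symmetric matrix `M`, there is a symmetric matrix `A₀` with eigenvalues in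
`{ν/2, 2/ν}`, obtained by diagonalizing `M` (with `ν/2` on the nonnegative eigenvalues
of `M` and `2/ν` on the negative ones), such that
`tr(AM) − tr(A₀M) ≥ (ν/2)‖M‖_F`. -/
theorem statement19
    (n : ℕ) (ν : ℝ) (hν : ν ∈ Set.Ioo (0 : ℝ) 1)
    (A M : Matrix (Fin n) (Fin n) ℝ) (hA : A.IsSymm) (hM : M.IsSymm)
    (hAlow : ∀ ξ : Fin n → ℝ, ν * (∑ i, ξ i ^ 2) ≤ ∑ i, ∑ j, A i j * ξ i * ξ j)
    (hAup : ∀ ξ : Fin n → ℝ, ∑ i, ∑ j, A i j * ξ i * ξ j ≤ ν⁻¹ * (∑ i, ξ i ^ 2)) :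
    ∃ A₀ : Matrix (Fin n) (Fin n) ℝ, A₀.IsSymm ∧
      (∃ (B : Matrix (Fin n) (Fin n) ℝ) (d e : Fin n → ℝ),
        B * Bᵀ = 1 ∧ Bᵀ * B = 1 ∧
        M = B * Matrix.diagonal e * Bᵀ ∧
        A₀ = B * Matrix.diagonal d * Bᵀ ∧
        (∀ i, d i = ν / 2 ∨ d i = 2 / ν) ∧
        (∀ i, 0 ≤ e i → d i = ν / 2) ∧
        (∀ i, e i < 0 → d i = 2 / ν)) ∧
      (∀ ξ : Fin n → ℝ, ν / 2 * (∑ i, ξ i ^ 2) ≤ ∑ i, ∑ j, A₀ i j * ξ i * ξ j) ∧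
      (∀ ξ : Fin n → ℝ, ∑ i, ∑ j, A₀ i j * ξ i * ξ j ≤ 2 / ν * (∑ i, ξ i ^ 2)) ∧
      ν / 2 * Real.sqrt ((M * M).trace) ≤ (A * M).trace - (A₀ * M).trace := by
  obtain ⟨hν0, hν1⟩ := hν
  -- M is Hermitian
  have hMh : M.IsHermitian := by
    rw [Matrix.IsHermitian, Matrix.conjTranspose]
    simpa [real_star_id] using hM.eq
  set B : Matrix (Fin n) (Fin n) ℝ := (hMh.eigenvectorUnitary : Matrix (Fin n) (Fin n) ℝ)
    with hB
  set e : Fin n → ℝ := hMh.eigenvalues with he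
  set d : Fin n → ℝ := fun i => if 0 ≤ e i then ν / 2 else 2 / ν with hd
  have hBBt : B * Bᵀ = 1 := by
    have := (Matrix.mem_unitaryGroup_iff).mp hMh.eigenvectorUnitary.2
    simpa [Matrix.star_eq_conjTranspose, Matrix.conjTranspose, real_star_id] using this
  have hBtB : Bᵀ * B = 1 := by
    have := (Matrix.mem_unitaryGroup_iff').mp hMh.eigenvectorUnitary.2
    simpa [Matrix.star_eq_conjTranspose, Matrix.conjTranspose, real_star_id] using this
  have hMspec : M = B * Matrix.diagonal e * Bᵀ := by
    have := hMh.spectral_theorem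
    simpa [Matrix.star_eq_conjTranspose, Matrix.conjTranspose, Function.comp, real_star_id] using this
  set A₀ : Matrix (Fin n) (Fin n) ℝ := B * Matrix.diagonal d * Bᵀ with hA₀
  -- symmetry of A₀
  have hA₀symm : A₀.IsSymm := by
    rw [Matrix.IsSymm, hA₀]
    rw [Matrix.transpose_mul, Matrix.transpose_mul, Matrix.transpose_transpose,
      Matrix.diagonal_transpose, mul_assoc]
  -- norm preservation
  have hnorm : ∀ ξ : Fin n → ℝ, ∑ i, (Bᵀ *ᵥ ξ) i ^ 2 = ∑ i, ξ i ^ 2 := by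
    intro ξ
    have h1 : ∑ i, (Bᵀ *ᵥ ξ) i ^ 2 = (Bᵀ *ᵥ ξ) ⬝ᵥ (Bᵀ *ᵥ ξ) := by
      simp [dotProduct, sq]
    have h2 : ∑ i, ξ i ^ 2 = ξ ⬝ᵥ ξ := by simp [dotProduct, sq]
    have h3 := quad_conj B 1 ξ
    rw [mul_one, hBBt] at h3
    rw [h1, h2]
    simpa using h3.symm
  have hdlow : ∀ i, ν / 2 ≤ d i := by
    intro i
    rw [hd]
    dsimp only
    split
    · exact le_rfl
    · rw [div_le_div_iff₀ (by norm_num) hν0]; nlinarith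
  have hdup : ∀ i, d i ≤ 2 / ν := by
    intro i
    rw [hd]
    dsimp only
    split
    · rw [div_le_div_iff₀ (by norm_num) hν0]; nlinarith
    · exact le_rfl
  -- quadratic form of A₀
  have hquadA₀ : ∀ ξ : Fin n → ℝ,
      ∑ i, ∑ j, A₀ i j * ξ i * ξ j = ∑ i, d i * (Bᵀ *ᵥ ξ) i ^ 2 := by
    intro ξ
    rw [quad_eq, hA₀, quad_conj, diag_quad]
  refine ⟨A₀, hA₀symm, ⟨B, d, e, hBBt, hBtB, hMspec, rfl, ?_, ?_, ?_⟩, ?_, ?_, ?_⟩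
  · intro i; rw [hd]; dsimp only; split <;> [exact Or.inl rfl; exact Or.inr rfl]
  · intro i hi; rw [hd]; simp [hi]
  · intro i hi; rw [hd]; simp [not_le.mpr hi]
  · intro ξ
    rw [hquadA₀, ← hnorm ξ, Finset.mul_sum]
    exact Finset.sum_le_sum fun i _ => mul_le_mul_of_nonneg_right (hdlow i) (sq_nonneg _)
  · intro ξ
    rw [hquadA₀, ← hnorm ξ, Finset.mul_sum]
    exact Finset.sum_le_sum fun i _ => mul_le_mul_of_nonneg_right (hdup i) (sq_nonneg _)
  · -- trace inequality
    set C : Matrix (Fin n) (Fin n) ℝ := Bᵀ * A * B with hC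
    -- columns of B are unit vectors
    have hcol : ∀ i, ∑ k, (B k i) ^ 2 = 1 := by
      intro i
      have : (Bᵀ * B) i i = (1 : Matrix (Fin n) (Fin n) ℝ) i i := by rw [hBtB]
      simpa [Matrix.mul_apply, Matrix.transpose_apply, sq] using this
    have hCdiag : ∀ i, C i i = ∑ k, ∑ l, A k l * B k i * B l i := by
      intro i
      simp only [hC, Matrix.mul_apply, Matrix.transpose_apply, Finset.sum_mul]
      rw [Finset.sum_comm]
      refine Finset.sum_congr rfl fun k _ => Finset.sum_congr rfl fun l _ => by ring
    have hClow : ∀ i, ν ≤ C i i := by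
      intro i
      have := hAlow (fun k => B k i)
      rw [hcol i, mul_one] at this
      rw [hCdiag i]; exact this
    have hCup : ∀ i, C i i ≤ ν⁻¹ := by
      intro i
      have := hAup (fun k => B k i)
      rw [hcol i, mul_one] at this
      rw [hCdiag i]; exact this
    -- trace(A * M) = ∑ C i i * e i
    have htrAM : (A * M).trace = ∑ i, C i i * e i := by
      rw [hMspec, ← mul_assoc, ← mul_assoc, Matrix.trace_mul_comm (A * B * diagonal e) Bᵀ,
        ← mul_assoc, ← mul_assoc, ← hC]
      simp [Matrix.trace, Matrix.diag, Matrix.mul_diagonal]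
    -- trace(A₀ * M) = ∑ d i * e i
    have htrA₀M : (A₀ * M).trace = ∑ i, d i * e i := by
      have : A₀ * M = B * (diagonal d * diagonal e) * Bᵀ := by
        rw [hA₀, hMspec]
        have : Bᵀ * (B * diagonal e * Bᵀ) = diagonal e * Bᵀ := by
          rw [← mul_assoc, ← mul_assoc, hBtB, one_mul]
        rw [mul_assoc (B * diagonal d) Bᵀ, this]
        noncomm_ring
      rw [this, Matrix.trace_mul_comm, ← mul_assoc, hBtB, one_mul,
        Matrix.diagonal_mul_diagonal]
      simp [Matrix.trace, Matrix.diag]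
    -- trace(M * M) = ∑ e i ^ 2
    have htrMM : (M * M).trace = ∑ i, e i ^ 2 := by
      have : M * M = B * (diagonal e * diagonal e) * Bᵀ := by
        rw [hMspec]
        have : Bᵀ * (B * diagonal e * Bᵀ) = diagonal e * Bᵀ := by
          rw [← mul_assoc, ← mul_assoc, hBtB, one_mul]
        rw [mul_assoc (B * diagonal e) Bᵀ, this]
        noncomm_ring
      rw [this, Matrix.trace_mul_comm, ← mul_assoc, hBtB, one_mul,
        Matrix.diagonal_mul_diagonal]
      simp [Matrix.trace, Matrix.diag, sq]
    rw [htrAM, htrA₀M, htrMM, ← Finset.sum_sub_distrib]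
    have key : ∀ i, ν / 2 * |e i| ≤ C i i * e i - d i * e i := by
      intro i
      rcases le_or_gt 0 (e i) with hi | hi
      · have hdi : d i = ν / 2 := by rw [hd]; simp [hi]
        rw [hdi, abs_of_nonneg hi]
        nlinarith [hClow i]
      · have hdi : d i = 2 / ν := by rw [hd]; simp [not_le.mpr hi]
        rw [hdi, abs_of_neg hi]
        have h1 : C i i ≤ ν⁻¹ := hCup i
        have h4 : (1 : ℝ) ≤ 1 / ν := one_le_one_div hν0 (le_of_lt hν1)
        have h5 : ν / 2 ≤ 2 / ν - C i i := by
          rw [(by rw [one_div] : (1:ℝ) / ν = ν⁻¹)] at h4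
          have : (2 : ℝ) / ν = ν⁻¹ + ν⁻¹ := by
            rw [inv_eq_one_div]; ring
          linarith
        have h6 := mul_le_mul_of_nonneg_right h5 (neg_nonneg.mpr hi.le)
        calc ν / 2 * (-e i) ≤ (2 / ν - C i i) * (-e i) := h6
          _ = C i i * e i - 2 / ν * e i := by ring
    calc ν / 2 * Real.sqrt (∑ i, e i ^ 2)
        ≤ ν / 2 * ∑ i, |e i| := by
          refine mul_le_mul_of_nonneg_left ?_ (by linarith)
          have h1 : ∑ i, e i ^ 2 ≤ (∑ i, |e i|) ^ 2 := by
            calc ∑ i, e i ^ 2 = ∑ i, |e i| ^ 2 := by simp [sq_abs]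
              _ ≤ (∑ i, |e i|) ^ 2 :=
                Finset.sum_sq_le_sq_sum_of_nonneg fun i _ => abs_nonneg _
          calc Real.sqrt (∑ i, e i ^ 2) ≤ Real.sqrt ((∑ i, |e i|) ^ 2) :=
                Real.sqrt_le_sqrt h1
            _ = ∑ i, |e i| := Real.sqrt_sq (Finset.sum_nonneg fun i _ => abs_nonneg _)
      _ = ∑ i, ν / 2 * |e i| := Finset.mul_sum _ _ _
      _ ≤ ∑ i, (C i i * e i - d i * e i) := Finset.sum_le_sum fun i _ => key i

end
end
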